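/- arXiv:2007.08295 — 2 statements merged into one kernel-verified Lean document; each statement's English description precedes it below -/
import Mathlib

section
/- The polynomials C_{n,λ} and S_{n,λ} satisfy the addition theorem C_{n,λ}(x₁+x₂, y₁+y₂) = Σ_{k=0}^n binom(n,k) [ C_{n-k,λ}(x₁,y₁) C_{k,λ}(x₂,y₂) − S_{n-k,λ}(x₁,y₁) S_{k,λ}(x₂,y₂) ]. -/
/-- The degenerate falling factorial with complex argument:
`(z)_{n,λ} = ∏_{j=0}^{n-1} (z - jλ)`. -/
noncomputable def degFallC (z : ℂ) (lam : ℝ) (n : ℕ) : ℂ :=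
  ∏ j ∈ Finset.range n, (z - (j : ℂ) * (lam : ℂ))

/-- `C_{n,λ}(x,y) = (1/2) Σ_{k=0}^n C(n,k) (x)_{n-k,λ} ((iy)_{k,λ} + (−iy)_{k,λ})`. -/
noncomputable def Cpoly (lam x y : ℝ) (n : ℕ) : ℂ :=
  (1 / 2) * ∑ k ∈ Finset.range (n + 1), (n.choose k : ℂ) * degFallC (x : ℂ) lam (n - k) *
    (degFallC (Complex.I * y) lam k + degFallC (-(Complex.I * y)) lam k)

/-- `S_{n,λ}(x,y) = (1/(2i)) Σ_{k=0}^n C(n,k) (x)_{n-k,λ} ((iy)_{k,λ} − (−iy)_{k,λ})`. -/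
noncomputable def Spoly (lam x y : ℝ) (n : ℕ) : ℂ :=
  (1 / (2 * Complex.I)) * ∑ k ∈ Finset.range (n + 1), (n.choose k : ℂ) *
    degFallC (x : ℂ) lam (n - k) *
    (degFallC (Complex.I * y) lam k - degFallC (-(Complex.I * y)) lam k)


/-!
With `z = x + iy` and `w = x - iy`, the degenerate Vandermonde identity
`(a + b)_{n,λ} = Σ_k C(n,k) (a)_{n-k,λ} (b)_{k,λ}` gives `C_{n,λ}(x,y) = ((z)_{n,λ} + (w)_{n,λ}) / 2`
and `S_{n,λ}(x,y) = ((z)_{n,λ} - (w)_{n,λ}) / (2i)`. Since `z` and `w` are additive in `(x, y)`,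
expanding `(z₁ + z₂)_{n,λ}` and `(w₁ + w₂)_{n,λ}` by Vandermonde reduces the theorem termwise to
`cos (a + b) = cos a cos b - sin a sin b` written in exponential form.
-/

open Complex Finset

lemma degFallC_succ (z : ℂ) (lam : ℝ) (n : ℕ) :
    degFallC z lam (n + 1) = degFallC z lam n * (z - n * lam) :=
  prod_range_succ _ _

lemma degFallC_add_eq_sum_antidiagonal (a b : ℂ) (lam : ℝ) (n : ℕ) :
    degFallC (a + b) lam n = ∑ ij ∈ antidiagonal n,
      (n.choose ij.1 : ℂ) * (degFallC a lam ij.1 * degFallC b lam ij.2) := by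
  induction n with
  | zero => simp [degFallC]
  | succ n ih =>
    rw [degFallC_succ, ih, sum_antidiagonal_choose_succ_mul
      (fun i j => degFallC a lam i * degFallC b lam j) n, ← sum_add_distrib, sum_mul]
    refine sum_congr rfl fun ij hij => ?_
    have hsum : (ij.1 : ℂ) + ij.2 = n := by exact_mod_cast mem_antidiagonal.mp hij
    have hchoose : (n.choose ij.2 : ℂ) = n.choose ij.1 := by
      exact_mod_cast (Nat.choose_symm_of_eq_add (mem_antidiagonal.mp hij).symm).symm
    rw [degFallC_succ, degFallC_succ, hchoose]
    -- `a + b - nλ = (a - iλ) + (b - jλ)` for `(i, j) = ij`, since `i + j = n`.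
    linear_combination (n.choose ij.1 * (degFallC a lam ij.1 * degFallC b lam ij.2) * lam) * hsum

lemma degFallC_add (a b : ℂ) (lam : ℝ) (n : ℕ) :
    degFallC (a + b) lam n = ∑ k ∈ range (n + 1),
      (n.choose k : ℂ) * degFallC a lam (n - k) * degFallC b lam k := by
  rw [add_comm a b, degFallC_add_eq_sum_antidiagonal, Nat.sum_antidiagonal_eq_sum_range_succ_mk]
  exact sum_congr rfl fun k _ => by ring

lemma Cpoly_eq_half_add (lam x y : ℝ) (n : ℕ) :
    Cpoly lam x y n = (degFallC (x + I * y) lam n + degFallC (x - I * y) lam n) / 2 := by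
  rw [sub_eq_add_neg, degFallC_add, degFallC_add, Cpoly, ← sum_add_distrib, mul_sum, sum_div]
  exact sum_congr rfl fun k _ => by ring

lemma Spoly_eq_sub_div_two_I (lam x y : ℝ) (n : ℕ) :
    Spoly lam x y n = (degFallC (x + I * y) lam n - degFallC (x - I * y) lam n) / (2 * I) := by
  rw [sub_eq_add_neg (x : ℂ), degFallC_add, degFallC_add, Spoly, ← sum_sub_distrib, mul_sum,
    sum_div]
  exact sum_congr rfl fun k _ => by ring

lemma half_add_mul_half_add_sub_sub_div_two_I_mul (p₁ q₁ p₂ q₂ : ℂ) :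
    (p₁ + q₁) / 2 * ((p₂ + q₂) / 2) - (p₁ - q₁) / (2 * I) * ((p₂ - q₂) / (2 * I)) =
      (p₁ * p₂ + q₁ * q₂) / 2 := by
  field_simp
  linear_combination -(p₁ - q₁) * (p₂ - q₂) * I_sq

theorem Cpoly_addition (lam x₁ x₂ y₁ y₂ : ℝ) (n : ℕ) :
    Cpoly lam (x₁ + x₂) (y₁ + y₂) n =
      ∑ k ∈ Finset.range (n + 1), (n.choose k : ℂ) *
        (Cpoly lam x₁ y₁ (n - k) * Cpoly lam x₂ y₂ k -
          Spoly lam x₁ y₁ (n - k) * Spoly lam x₂ y₂ k) := by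
  have hz : ((x₁ + x₂ : ℝ) : ℂ) + I * (y₁ + y₂ : ℝ) = (x₁ + I * y₁) + (x₂ + I * y₂) := by
    push_cast; ring
  have hw : ((x₁ + x₂ : ℝ) : ℂ) - I * (y₁ + y₂ : ℝ) = (x₁ - I * y₁) + (x₂ - I * y₂) := by
    push_cast; ring
  rw [Cpoly_eq_half_add, hz, hw, degFallC_add, degFallC_add, ← sum_add_distrib, sum_div]
  refine sum_congr rfl fun k _ => ?_
  rw [Cpoly_eq_half_add, Cpoly_eq_half_add, Spoly_eq_sub_div_two_I, Spoly_eq_sub_div_two_I,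
    half_add_mul_half_add_sub_sub_div_two_I_mul]
  ring
end

section
/- The degenerate λ-Stirling polynomials of the second kind satisfy the summation identity Σ_{k=0}^{n} S_{2,λ}^{(x)}(n,k)(y)_k = (x+y)_{n,λ} for all real x, y, λ and n ≥ 0, equivalently, the identity e_λ^{(x+y)}(t) = Σ_{n≥0} [Σ_{k=0}^n S_{2,λ}^{(x)}(n,k)(y)_k] t^n/n! as formal power series. -/
open PowerSeries

/-- The degenerate falling factorial `(x)_{n,λ} = ∏_{j=0}^{n-1} (x - jλ)`. -/
noncomputable def degFall (x lam : ℝ) (n : ℕ) : ℝ := ∏ j ∈ Finset.range n, (x - j * lam)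

/-- The ordinary falling factorial `(t)_k = t(t-1)⋯(t-k+1)`. -/
noncomputable def fall (t : ℝ) (k : ℕ) : ℝ := ∏ j ∈ Finset.range k, (t - j)

/-- The formal power series `e_λ^x(t) = Σ_{n≥0} (x)_{n,λ} t^n/n!`. -/
noncomputable def degExpS (lam x : ℝ) : PowerSeries ℝ :=
  PowerSeries.mk fun n => degFall x lam n / n.factorial

/-- The degenerate λ-Stirling polynomial of the second kind `S_{2,λ}^{(x)}(n,k)`,
defined as `n!` times the `t^n` coefficient of `(e_λ(t)-1)^k/k! · e_λ^x(t)`. -/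
noncomputable def degStirling2 (lam x : ℝ) (n k : ℕ) : ℝ :=
  (n.factorial : ℝ) * PowerSeries.coeff n
    (PowerSeries.C (R := ℝ) (1 / k.factorial) * (degExpS lam 1 - 1) ^ k * degExpS lam x)

/-!
Write `E = e_λ(t)`. The degenerate Vandermonde identity
`(x + y)_{n,λ} = Σ_{i+j=n} binom n i (x)_{i,λ} (y)_{j,λ}` says `e_λ^x e_λ^y = e_λ^{x+y}`,
hence `E^N = e_λ^N`. For `y = N ∈ ℕ` we have `(N)_k / k! = binom N k`, so the sum is `n!`
times the `t^n`-coefficient of `Σ_k binom N k (E - 1)^k e_λ^x = E^N e_λ^x = e_λ^{x+N}`.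
Both sides are polynomials in `y` agreeing at every natural number, hence everywhere.
-/

open Finset

open scoped Nat

theorem Finset.sum_range_succ_eq_of_vanishing {M : Type*} [AddCommMonoid M] {f : ℕ → M}
    {a b : ℕ} (ha : ∀ k, a < k → f k = 0) (hb : ∀ k, b < k → f k = 0) :
    ∑ k ∈ range (a + 1), f k = ∑ k ∈ range (b + 1), f k := by
  wlog hab : a ≤ b generalizing a b
  · exact (this hb ha (by omega)).symm
  exact sum_subset (range_subset_range.2 (by omega)) fun k _ hk ↦ ha k (by simpa using hk)

theorem Polynomial.eq_of_forall_eval_natCast_eq {R : Type*} [CommRing R] [IsDomain R]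
    [CharZero R] {p q : Polynomial R} (h : ∀ N : ℕ, p.eval (N : R) = q.eval (N : R)) : p = q :=
  eq_of_infinite_eval_eq p q (Set.infinite_of_injective_forall_mem Nat.cast_injective h)

theorem PowerSeries.coeff_mk_div_factorial_mul_mk_div_factorial {K : Type*} [Field K]
    [CharZero K] (f g : ℕ → K) (n : ℕ) :
    coeff n (mk (fun m ↦ f m / m !) * mk (fun m ↦ g m / m !)) =
      (∑ ij ∈ antidiagonal n, n.choose ij.1 * (f ij.1 * g ij.2)) / n ! := by
  rw [coeff_mul, sum_div]
  refine sum_congr rfl fun ij hij ↦ ?_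
  obtain rfl := mem_antidiagonal.1 hij
  rw [coeff_mk, coeff_mk, Nat.cast_choose K (Nat.le_add_right _ _), Nat.add_sub_cancel_left]
  have : ((ij.1 + ij.2)! : K) ≠ 0 := Nat.cast_ne_zero.2 (Nat.factorial_ne_zero _)
  field_simp

theorem PowerSeries.coeff_pow_mul_eq_zero_of_X_dvd {R : Type*} [CommSemiring R]
    {A : PowerSeries R} (hA : X ∣ A) (F : PowerSeries R) {n k : ℕ} (h : n < k) :
    coeff n (A ^ k * F) = 0 :=
  X_pow_dvd_iff.1 ((pow_dvd_pow_of_dvd hA k).mul_right F) n h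

theorem PowerSeries.coeff_add_one_pow_mul {R : Type*} [CommSemiring R] (A F : PowerSeries R)
    (n N : ℕ) :
    coeff n ((A + 1) ^ N * F) = ∑ k ∈ range (N + 1), N.choose k * coeff n (A ^ k * F) := by
  rw [add_pow, sum_mul, map_sum]
  refine sum_congr rfl fun k _ ↦ ?_
  rw [one_pow, mul_one, mul_comm _ (N.choose k : PowerSeries R), mul_assoc, ← map_natCast C,
    coeff_C_mul]

theorem fall_natCast (N k : ℕ) : fall N k = N.descFactorial k := by
  rw [fall, ← descPochhammer_eval_eq_prod_range, descPochhammer_eval_eq_descFactorial]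

theorem degFall_succ (x lam : ℝ) (n : ℕ) :
    degFall x lam (n + 1) = degFall x lam n * (x - n * lam) :=
  prod_range_succ _ _

theorem degFall_add (x y lam : ℝ) (n : ℕ) :
    degFall (x + y) lam n =
      ∑ ij ∈ antidiagonal n, n.choose ij.1 * (degFall x lam ij.1 * degFall y lam ij.2) := by
  induction n with
  | zero => simp [degFall]
  | succ n ih =>
    rw [sum_antidiagonal_choose_succ_mul (fun i j ↦ degFall x lam i * degFall y lam j),
      ← sum_add_distrib, degFall_succ, ih, sum_mul]
    refine sum_congr rfl fun ij hij ↦ ?_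
    have hn : (n : ℝ) = ij.1 + ij.2 := by exact_mod_cast (mem_antidiagonal.1 hij).symm
    rw [Nat.choose_symm_of_eq_add (mem_antidiagonal.1 hij).symm, degFall_succ, degFall_succ, hn]
    ring

theorem degExpS_mul (lam x y : ℝ) : degExpS lam x * degExpS lam y = degExpS lam (x + y) := by
  ext n
  rw [degExpS, degExpS, coeff_mk_div_factorial_mul_mk_div_factorial, degExpS, coeff_mk,
    degFall_add]

theorem degExpS_zero (lam : ℝ) : degExpS lam 0 = 1 := by
  ext (_ | n) <;> simp [degExpS, degFall, coeff_one, prod_range_succ']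

theorem degExpS_one_pow (lam : ℝ) (N : ℕ) : degExpS lam 1 ^ N = degExpS lam N := by
  induction N with
  | zero => rw [pow_zero, Nat.cast_zero, degExpS_zero]
  | succ N ih => rw [pow_succ, ih, degExpS_mul, Nat.cast_succ]

theorem X_dvd_degExpS_sub_one (lam x : ℝ) : X ∣ degExpS lam x - 1 := by
  simp [X_dvd_iff, degExpS, degFall]

theorem degStirling2_eq_factorial_div_mul_coeff (lam x : ℝ) (n k : ℕ) :
    degStirling2 lam x n k = n ! / k ! * coeff n ((degExpS lam 1 - 1) ^ k * degExpS lam x) := by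
  rw [degStirling2, mul_assoc, coeff_C_mul]
  ring

theorem degStirling2_eq_zero_of_lt (lam x : ℝ) {n k : ℕ} (h : n < k) :
    degStirling2 lam x n k = 0 := by
  rw [degStirling2_eq_factorial_div_mul_coeff,
    coeff_pow_mul_eq_zero_of_X_dvd (X_dvd_degExpS_sub_one lam 1) _ h, mul_zero]

theorem degStirling2_mul_fall_natCast (lam x : ℝ) (n k N : ℕ) :
    degStirling2 lam x n k * fall N k =
      n ! * (N.choose k * coeff n ((degExpS lam 1 - 1) ^ k * degExpS lam x)) := by
  rw [degStirling2_eq_factorial_div_mul_coeff, fall_natCast,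
    Nat.descFactorial_eq_factorial_mul_choose, Nat.cast_mul]
  field_simp

theorem sum_degStirling2_mul_fall_natCast (lam x : ℝ) (n N : ℕ) :
    ∑ k ∈ range (n + 1), degStirling2 lam x n k * fall N k = degFall (x + N) lam n := by
  calc ∑ k ∈ range (n + 1), degStirling2 lam x n k * fall N k
      = ∑ k ∈ range (N + 1), degStirling2 lam x n k * fall N k := by
        refine sum_range_succ_eq_of_vanishing (fun k hk ↦ ?_) fun k hk ↦ ?_
        · rw [degStirling2_eq_zero_of_lt lam x hk, zero_mul]
        · rw [fall_natCast, Nat.descFactorial_eq_zero_iff_lt.2 hk, Nat.cast_zero, mul_zero]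
    _ = n ! * coeff n ((degExpS lam 1 - 1 + 1) ^ N * degExpS lam x) := by
        simp only [degStirling2_mul_fall_natCast, ← mul_sum, coeff_add_one_pow_mul]
    _ = degFall (x + N) lam n := by
        rw [sub_add_cancel, degExpS_one_pow, degExpS_mul, degExpS, coeff_mk, add_comm]
        field_simp

theorem sum_degStirling2_eq_degFall (lam x y : ℝ) (n : ℕ) :
    ∑ k ∈ Finset.range (n + 1), degStirling2 lam x n k * fall y k =
      degFall (x + y) lam n := by
  let p : Polynomial ℝ :=
    ∑ k ∈ range (n + 1), Polynomial.C (degStirling2 lam x n k) * descPochhammer ℝ k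
  let q : Polynomial ℝ := ∏ j ∈ range n, (Polynomial.X + Polynomial.C (x - j * lam))
  have eval_p (t : ℝ) :
      p.eval t = ∑ k ∈ range (n + 1), degStirling2 lam x n k * fall t k := by
    simp [p, Polynomial.eval_finsetSum, descPochhammer_eval_eq_prod_range, fall]
  have eval_q (t : ℝ) : q.eval t = degFall (x + t) lam n := by
    simp only [q, Polynomial.eval_prod, Polynomial.eval_add, Polynomial.eval_X,
      Polynomial.eval_C, degFall]
    exact prod_congr rfl fun j _ ↦ by ring
  have hpq : p = q := Polynomial.eq_of_forall_eval_natCast_eq fun N ↦ by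
    rw [eval_p, eval_q, sum_degStirling2_mul_fall_natCast]
  rw [← eval_p, hpq, eval_q]
end
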